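/- With Lambda_j as above, every point z that belongs to Lambda_j(B_r(r e_1)) for infinitely many j lies in the closed set { z in C^n : Re(z_1) >= (1/(2r)) * sum_{k=2}^n |z_k|^2 }. -/

import Mathlib

open Complex Filter

/-- The anisotropic dilation `Λ` with parameter `s`. -/
noncomputable def Lam (n : ℕ) (s : ℝ) (z : EuclideanSpace ℂ (Fin (n + 1))) :
    EuclideanSpace ℂ (Fin (n + 1)) :=
  WithLp.toLp 2 (fun i => if i = 0 then z i / (s : ℂ) else z i / (Real.sqrt s : ℂ))

/-- Every point belonging to `Λ_j(B_r(r e₁))` for infinitely many `j` lies in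
the closed set `{z : Re z₁ ≥ (1/(2r)) ∑_{k ≥ 2} |z_k|²}`. -/
theorem stmt_2 (n : ℕ) (r : ℝ) (hr : 0 < r)
    (rj : ℕ → ℝ) (hrj : ∀ j, 0 < rj j)
    (hlim : Tendsto rj atTop (nhds 0))
    (z : EuclideanSpace ℂ (Fin (n + 1)))
    (hz : ∃ᶠ j in atTop,
      z ∈ Lam n (rj j) '' Metric.ball (EuclideanSpace.single 0 (r : ℂ)) r) :
    (1 / (2 * r)) * ∑ k ∈ Finset.univ.erase 0, ‖z k‖ ^ 2 ≤ (z 0).re := by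
  obtain ⟨j, w, hw, hΛ⟩ := hz.exists
  set s := rj j with hs
  have hs0 : 0 < s := hrj j
  have hz0 : z 0 = w 0 / (s : ℂ) := by rw [← hΛ]; simp [Lam]
  have hzk : ∀ k : Fin (n + 1), k ≠ 0 → z k = w k / (Real.sqrt s : ℂ) := by
    intro k hk; rw [← hΛ]; simp [Lam, hk]
  have hd : dist w (EuclideanSpace.single 0 (r : ℂ)) < r := Metric.mem_ball.mp hw
  rw [EuclideanSpace.dist_eq] at hd
  have hsum : ∑ i, dist (w i) ((EuclideanSpace.single 0 (r : ℂ)) i) ^ 2 < r ^ 2 :=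
    (Real.sqrt_lt' hr).mp hd
  have h1 : ∀ k : Fin (n + 1), k ≠ 0 →
      dist (w k) ((EuclideanSpace.single 0 (r : ℂ)) k) ^ 2 = ‖w k‖ ^ 2 := by
    intro k hk
    rw [EuclideanSpace.single_apply]
    simp [hk, dist_eq_norm]
  have hsplit : ∑ i, dist (w i) ((EuclideanSpace.single 0 (r : ℂ)) i) ^ 2
      = ‖w 0 - (r : ℂ)‖ ^ 2 + ∑ k ∈ Finset.univ.erase 0, ‖w k‖ ^ 2 := by
    rw [← Finset.add_sum_erase _ _ (Finset.mem_univ 0), EuclideanSpace.single_apply]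
    simp only [if_pos rfl, dist_eq_norm]
    congr 1
    exact Finset.sum_congr rfl fun k hk => by
      have := h1 k (Finset.mem_erase.mp hk).1; rwa [dist_eq_norm] at this
  set S := ∑ k ∈ Finset.univ.erase 0, ‖w k‖ ^ 2 with hS
  have hSnn : 0 ≤ S := Finset.sum_nonneg fun k _ => sq_nonneg _
  have hnorm0 : ‖w 0 - (r : ℂ)‖ ^ 2 = ((w 0).re - r) ^ 2 + (w 0).im ^ 2 := by
    rw [Complex.sq_norm, Complex.normSq_apply]
    simp only [Complex.sub_re, Complex.sub_im, Complex.ofReal_re, Complex.ofReal_im, sub_zero]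
    ring
  have hkey : (1 / (2 * r)) * S ≤ (w 0).re := by
    rw [hsplit, hnorm0] at hsum
    rw [div_mul_eq_mul_div, div_le_iff₀ (by positivity)]
    nlinarith [sq_nonneg ((w 0).re), sq_nonneg ((w 0).im)]
  -- transfer to z
  have hzknorm : ∀ k : Fin (n + 1), k ≠ 0 → ‖z k‖ ^ 2 = ‖w k‖ ^ 2 / s := by
    intro k hk
    rw [hzk k hk, norm_div, div_pow]
    congr 1
    rw [Complex.norm_real, Real.norm_eq_abs, _root_.abs_of_nonneg (Real.sqrt_nonneg _),
      Real.sq_sqrt hs0.le]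
  have hzsum : ∑ k ∈ Finset.univ.erase 0, ‖z k‖ ^ 2 = S / s := by
    rw [hS, Finset.sum_div]
    exact Finset.sum_congr rfl fun k hk => hzknorm k (Finset.mem_erase.mp hk).1
  have hz0re : (z 0).re = (w 0).re / s := by rw [hz0, Complex.div_ofReal_re]
  rw [hzsum, hz0re, mul_div_assoc']
  gcongr
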